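/- arXiv:2605.01816 — 5 statements merged into one kernel-verified Lean document; each statement's English description precedes it below -/
import Mathlib

section
/- Let φ1 : P_{a1}(X1) → [−∞,+∞) be C-concave and not identically −∞. Then π ∈ ∂⁺_{t,C} φ1 if and only if φ1(pr¹_♯π) + φ1^C(pr²_♯π) = ∫ c(x1,x2) dπ(x1,x2). -/
open MeasureTheory Topology ENNReal Set

noncomputable section

set_option linter.unusedSectionVars false

namespace OTRM

noncomputable instance instMSPM {X : Type*} [MeasurableSpace X] [TopologicalSpace X]
    [OpensMeasurableSpace X] : MeasurableSpace (ProbabilityMeasure X) := borel _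

instance instBSPM {X : Type*} [MeasurableSpace X] [TopologicalSpace X]
    [OpensMeasurableSpace X] : BorelSpace (ProbabilityMeasure X) := ⟨rfl⟩

variable {X1 X2 : Type*}
  [MeasurableSpace X1] [TopologicalSpace X1] [BorelSpace X1] [PolishSpace X1]
  [MeasurableSpace X2] [TopologicalSpace X2] [BorelSpace X2] [PolishSpace X2]

def Coupling {Y1 Y2 : Type*} [MeasurableSpace Y1] [MeasurableSpace Y2]
    (μ1 : ProbabilityMeasure Y1) (μ2 : ProbabilityMeasure Y2) :
    Set (ProbabilityMeasure (Y1 × Y2)) :=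
  {π | (π : Measure (Y1 × Y2)).map Prod.fst = (μ1 : Measure Y1) ∧
       (π : Measure (Y1 × Y2)).map Prod.snd = (μ2 : Measure Y2)}

def transportCost (c : X1 × X2 → ℝ≥0∞) (π : ProbabilityMeasure (X1 × X2)) : ℝ≥0∞ :=
  ∫⁻ p, c p ∂(π : Measure (X1 × X2))

def OTCost (c : X1 × X2 → ℝ≥0∞) (μ1 : ProbabilityMeasure X1) (μ2 : ProbabilityMeasure X2) :
    ℝ≥0∞ :=
  ⨅ π ∈ Coupling μ1 μ2, transportCost c π

/-- First marginal of a transport plan. -/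
def margFst (π : ProbabilityMeasure (X1 × X2)) : ProbabilityMeasure X1 :=
  π.map measurable_fst.aemeasurable

/-- Second marginal of a transport plan. -/
def margSnd (π : ProbabilityMeasure (X1 × X2)) : ProbabilityMeasure X2 :=
  π.map measurable_snd.aemeasurable

/-- The iterated optimal transport cost `𝒞(M1, M2)` between laws of random measures. -/
def IterOTCost (c : X1 × X2 → ℝ≥0∞)
    (M1 : ProbabilityMeasure (ProbabilityMeasure X1))
    (M2 : ProbabilityMeasure (ProbabilityMeasure X2)) : ℝ≥0∞ :=
  ⨅ P ∈ Coupling M1 M2,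
    ∫⁻ p, OTCost c p.1 p.2 ∂(P : Measure (ProbabilityMeasure X1 × ProbabilityMeasure X2))

/-- The set of (laws of) random couplings between `M1` and `M2`. -/
def RandCoupling (M1 : ProbabilityMeasure (ProbabilityMeasure X1))
    (M2 : ProbabilityMeasure (ProbabilityMeasure X2)) :
    Set (ProbabilityMeasure (ProbabilityMeasure (X1 × X2))) :=
  {P | (P : Measure (ProbabilityMeasure (X1 × X2))).map margFst
          = (M1 : Measure (ProbabilityMeasure X1)) ∧
       (P : Measure (ProbabilityMeasure (X1 × X2))).map margSnd
          = (M2 : Measure (ProbabilityMeasure X2))}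


/-- The pair-marginal pushforward `(pr¹_♯, pr²_♯)_♯ P` of a random coupling. -/
def margPairLaw (P : ProbabilityMeasure (ProbabilityMeasure (X1 × X2))) :
    Measure (ProbabilityMeasure X1 × ProbabilityMeasure X2) :=
  (P : Measure (ProbabilityMeasure (X1 × X2))).map fun π => (margFst π, margSnd π)

/-- The set of `c`-optimal couplings (between their own marginals). -/
def OptPlans (c : X1 × X2 → ℝ≥0∞) : Set (ProbabilityMeasure (X1 × X2)) :=
  {π | transportCost c π = OTCost c (margFst π) (margSnd π)}

/-- Probability measures with finite `a`-moment: `P_a(X)`. -/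
def Pa {X : Type*} [MeasurableSpace X] (a : X → ℝ≥0∞) : Set (ProbabilityMeasure X) :=
  {μ | (∫⁻ x, a x ∂(μ : Measure X)) ≠ ⊤}

/-- Plans both of whose marginals have finite moments: `P_{a1 ⊕ a2}(X1 × X2)`. -/
def PaPair (a1 : X1 → ℝ≥0∞) (a2 : X2 → ℝ≥0∞) : Set (ProbabilityMeasure (X1 × X2)) :=
  {π | margFst π ∈ Pa a1 ∧ margSnd π ∈ Pa a2}

section Kframework

variable {Y1 Y2 : Type*}

/-- `K`-concavity of `φ` relative to the domains `D1`, `D2` (Definition 2.2(2)):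
`φ` is not identically `-∞` on `D1` and is, on `D1`, an infimum of functions
`y1 ↦ K(y1,y2) - α` with `y2 ∈ D2`, `α ∈ ℝ`. -/
def KConcaveOn (K : Y1 → Y2 → ℝ≥0∞) (D1 : Set Y1) (D2 : Set Y2) (φ : Y1 → EReal) : Prop :=
  (∃ y1 ∈ D1, φ y1 ≠ ⊥) ∧
    ∃ A : Set (Y2 × ℝ), (∀ p ∈ A, p.1 ∈ D2) ∧
      ∀ y1 ∈ D1, φ y1 = ⨅ p ∈ A, ((K y1 p.1 : EReal) - (p.2 : EReal))

/-- The `K`-transform of `φ` (Definition 2.2(3)). -/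
def KTransform (K : Y1 → Y2 → ℝ≥0∞) (D1 : Set Y1) (φ : Y1 → EReal) : Y2 → EReal :=
  fun y2 => ⨅ y1 ∈ D1, ((K y1 y2 : EReal) - φ y1)

/-- The `K`-superdifferential of `φ` (Definition 2.2(4)). -/
def KSuperdiff (K : Y1 → Y2 → ℝ≥0∞) (D1 : Set Y1) (D2 : Set Y2) (φ : Y1 → EReal) :
    Set (Y1 × Y2) :=
  {p | p.1 ∈ D1 ∧ p.2 ∈ D2 ∧ φ p.1 ≠ ⊥ ∧
    ∀ y1' ∈ D1, ((K p.1 p.2 : EReal) - φ p.1) ≤ ((K y1' p.2 : EReal) - φ y1')}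

/-- `K`-cyclical monotonicity of a set of pairs (Definition 2.2(1)). -/
def KCyclMono (K : Y1 → Y2 → ℝ≥0∞) (G : Set (Y1 × Y2)) : Prop :=
  ∀ (k : ℕ), 1 ≤ k → ∀ f : Fin k → Y1 × Y2, (∀ i, f i ∈ G) →
    ∀ σ : Equiv.Perm (Fin k), (∑ i, K (f i).1 (f i).2) ≤ ∑ i, K (f i).1 (f (σ i)).2

end Kframework

/-- First marginal of a measure on `X1 × X2 × X1`. -/
def margFirst3 (θ : ProbabilityMeasure (X1 × X2 × X1)) : ProbabilityMeasure X1 :=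
  θ.map measurable_fst.aemeasurable

/-- Third marginal of a measure on `X1 × X2 × X1`. -/
def margThird3 (θ : ProbabilityMeasure (X1 × X2 × X1)) : ProbabilityMeasure X1 :=
  θ.map (measurable_snd.comp measurable_snd).aemeasurable

/-- The total `C`-superdifferential of `φ` (Definition 3.4). -/
def TotalSuperdiff (c : X1 × X2 → ℝ≥0∞) (a1 : X1 → ℝ≥0∞) (a2 : X2 → ℝ≥0∞)
    (φ : ProbabilityMeasure X1 → EReal) : Set (ProbabilityMeasure (X1 × X2)) :=
  {π | π ∈ PaPair a1 a2 ∧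
    ∀ θ : ProbabilityMeasure (X1 × X2 × X1),
      (θ : Measure (X1 × X2 × X1)).map (fun p => (p.1, p.2.1)) = (π : Measure (X1 × X2)) →
      margThird3 θ ∈ Pa a1 →
      ((∫⁻ p, c (p.1, p.2.1) ∂(θ : Measure (X1 × X2 × X1)) : ℝ≥0∞) : EReal)
          - ((∫⁻ p, c (p.2.2, p.2.1) ∂(θ : Measure (X1 × X2 × X1)) : ℝ≥0∞) : EReal)
        ≤ φ (margFirst3 θ) - φ (margThird3 θ)}

/-- Total `C`-cyclical monotonicity of a set of plans (Definition 3.5). -/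
def TotallyCCyclMono (c : X1 × X2 → ℝ≥0∞) (F : Set (ProbabilityMeasure (X1 × X2))) : Prop :=
  ∀ (N : ℕ), 1 ≤ N → ∀ θ : ProbabilityMeasure (Fin N → X1 × X2),
    (∀ n : Fin N, θ.map (measurable_pi_apply n).aemeasurable ∈ F) →
    ∀ σ : Equiv.Perm (Fin N),
      (∫⁻ ω, ∑ i, c (ω i) ∂(θ : Measure (Fin N → X1 × X2)))
        ≤ ∫⁻ ω, ∑ i, c ((ω i).1, (ω (σ i)).2) ∂(θ : Measure (Fin N → X1 × X2))



section Auxiliary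

open ProbabilityTheory

lemma coe_ennreal_eq_real (x : ℝ≥0∞) (hx : x ≠ ⊤) : (x : EReal) = ((x.toReal : ℝ) : EReal) := by
  rw [← EReal.coe_toReal (x := (x : EReal)) (by simpa using hx) (by simp),
    EReal.toReal_coe_ennreal]

lemma glue_fst {Y1 Y2 Y3 : Type*} [MeasurableSpace Y1] [MeasurableSpace Y2] [MeasurableSpace Y3]
    (μ : Measure Y1) [IsProbabilityMeasure μ] (κ : Kernel Y1 Y2) (η : Kernel Y1 Y3)
    [IsMarkovKernel κ] [IsMarkovKernel η] :
    (μ ⊗ₘ (κ ×ₖ η)).map (fun p => (p.1, p.2.1)) = μ ⊗ₘ κ := by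
  ext s hs
  rw [Measure.map_apply (by fun_prop) hs, Measure.compProd_apply (hs.preimage (by fun_prop)),
    Measure.compProd_apply hs]
  refine lintegral_congr fun a => ?_
  have : (Prod.mk a ⁻¹' ((fun p : Y1 × Y2 × Y3 => (p.1, p.2.1)) ⁻¹' s))
      = (Prod.mk a ⁻¹' s) ×ˢ (univ : Set Y3) := by
    ext p; simp [Set.mem_prod]
  rw [this, Kernel.prod_apply, Measure.prod_prod, measure_univ, mul_one]

lemma glue_snd {Y1 Y2 Y3 : Type*} [MeasurableSpace Y1] [MeasurableSpace Y2] [MeasurableSpace Y3]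
    (μ : Measure Y1) [IsProbabilityMeasure μ] (κ : Kernel Y1 Y2) (η : Kernel Y1 Y3)
    [IsMarkovKernel κ] [IsMarkovKernel η] :
    (μ ⊗ₘ (κ ×ₖ η)).map (fun p => (p.1, p.2.2)) = μ ⊗ₘ η := by
  ext s hs
  rw [Measure.map_apply (by fun_prop) hs, Measure.compProd_apply (hs.preimage (by fun_prop)),
    Measure.compProd_apply hs]
  refine lintegral_congr fun a => ?_
  have : (Prod.mk a ⁻¹' ((fun p : Y1 × Y2 × Y3 => (p.1, p.2.2)) ⁻¹' s))
      = (univ : Set Y2) ×ˢ (Prod.mk a ⁻¹' s) := by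
    ext p; simp [Set.mem_prod]
  rw [this, Kernel.prod_apply, Measure.prod_prod, measure_univ, one_mul]

lemma exists_glue {Z A B : Type*} [MeasurableSpace Z]
    [MeasurableSpace A] [StandardBorelSpace A] [Nonempty A]
    [MeasurableSpace B] [StandardBorelSpace B] [Nonempty B]
    (ρ1 : Measure (Z × A)) (ρ2 : Measure (Z × B))
    [IsProbabilityMeasure ρ1] [IsProbabilityMeasure ρ2] (h : ρ2.fst = ρ1.fst) :
    ∃ θ : Measure (Z × A × B), IsProbabilityMeasure θ ∧
      θ.map (fun p => (p.1, p.2.1)) = ρ1 ∧ θ.map (fun p => (p.1, p.2.2)) = ρ2 := by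
  refine ⟨ρ1.fst ⊗ₘ (ρ1.condKernel ×ₖ ρ2.condKernel), inferInstance, ?_, ?_⟩
  · rw [glue_fst, ρ1.disintegrate]
  · rw [glue_snd, ← h, ρ2.disintegrate]

lemma lintegral_margFst (π : ProbabilityMeasure (X1 × X2)) {f : X1 → ℝ≥0∞}
    (hf : Measurable f) :
    ∫⁻ x, f x ∂((margFst π : ProbabilityMeasure X1) : Measure X1)
      = ∫⁻ p, f p.1 ∂(π : Measure (X1 × X2)) := by
  rw [margFst, ProbabilityMeasure.toMeasure_map, lintegral_map hf measurable_fst]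

lemma lintegral_margSnd (π : ProbabilityMeasure (X1 × X2)) {f : X2 → ℝ≥0∞}
    (hf : Measurable f) :
    ∫⁻ x, f x ∂((margSnd π : ProbabilityMeasure X2) : Measure X2)
      = ∫⁻ p, f p.2 ∂(π : Measure (X1 × X2)) := by
  rw [margSnd, ProbabilityMeasure.toMeasure_map, lintegral_map hf measurable_snd]

lemma transportCost_ne_top {c : X1 × X2 → ℝ≥0∞} {a1 : X1 → ℝ≥0∞} {a2 : X2 → ℝ≥0∞}
    (ha1 : Measurable a1) (ha2 : Measurable a2)
    (hdom : ∀ x1 x2, c (x1, x2) ≤ a1 x1 + a2 x2)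
    (π : ProbabilityMeasure (X1 × X2)) (hπ : π ∈ PaPair a1 a2) :
    transportCost c π ≠ ⊤ := by
  have hb : transportCost c π
      ≤ (∫⁻ p, a1 p.1 ∂(π : Measure (X1 × X2))) + ∫⁻ p, a2 p.2 ∂(π : Measure (X1 × X2)) := by
    rw [← lintegral_add_left (f := fun p : X1 × X2 => a1 p.1) (by fun_prop)]
    refine lintegral_mono fun p => ?_
    have := hdom p.1 p.2
    simpa using this
  refine ne_top_of_le_ne_top (ENNReal.add_ne_top.2 ⟨?_, ?_⟩) hb
  · rw [← lintegral_margFst _ ha1]; exact hπ.1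
  · rw [← lintegral_margSnd _ ha2]; exact hπ.2

lemma coupling_mem_PaPair {a1 : X1 → ℝ≥0∞} {a2 : X2 → ℝ≥0∞}
    {μ : ProbabilityMeasure X1} {μ2 : ProbabilityMeasure X2}
    (hμ : μ ∈ Pa a1) (hμ2 : μ2 ∈ Pa a2)
    {γ : ProbabilityMeasure (X1 × X2)} (hγ : γ ∈ Coupling μ μ2) :
    γ ∈ PaPair a1 a2 := by
  constructor
  · show (∫⁻ x, a1 x ∂((margFst γ : ProbabilityMeasure X1) : Measure X1)) ≠ ⊤
    rw [margFst, ProbabilityMeasure.toMeasure_map, hγ.1]; exact hμ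
  · show (∫⁻ x, a2 x ∂((margSnd γ : ProbabilityMeasure X2) : Measure X2)) ≠ ⊤
    rw [margSnd, ProbabilityMeasure.toMeasure_map, hγ.2]; exact hμ2

lemma self_mem_coupling (π : ProbabilityMeasure (X1 × X2)) :
    π ∈ Coupling (margFst π) (margSnd π) := by
  constructor
  · rw [margFst, ProbabilityMeasure.toMeasure_map]
  · rw [margSnd, ProbabilityMeasure.toMeasure_map]

lemma OTCost_ne_top {c : X1 × X2 → ℝ≥0∞} {a1 : X1 → ℝ≥0∞} {a2 : X2 → ℝ≥0∞}
    (ha1 : Measurable a1) (ha2 : Measurable a2)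
    (hdom : ∀ x1 x2, c (x1, x2) ≤ a1 x1 + a2 x2)
    {μ : ProbabilityMeasure X1} {μ2 : ProbabilityMeasure X2}
    (hμ : μ ∈ Pa a1) (hμ2 : μ2 ∈ Pa a2) :
    OTCost c μ μ2 ≠ ⊤ := by
  haveI : IsProbabilityMeasure ((μ : Measure X1).prod (μ2 : Measure X2)) := by infer_instance
  set γ : ProbabilityMeasure (X1 × X2) :=
    ⟨(μ : Measure X1).prod (μ2 : Measure X2), this⟩ with hγdef
  have hγ : γ ∈ Coupling μ μ2 := by
    constructor
    · show ((μ : Measure X1).prod (μ2 : Measure X2)).map Prod.fst = (μ : Measure X1)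
      rw [Measure.map_fst_prod]; simp
    · show ((μ : Measure X1).prod (μ2 : Measure X2)).map Prod.snd = (μ2 : Measure X2)
      rw [Measure.map_snd_prod]; simp
  have hle : OTCost c μ μ2 ≤ transportCost c γ := iInf₂_le γ hγ
  exact ne_top_of_le_ne_top
    (transportCost_ne_top ha1 ha2 hdom γ (coupling_mem_PaPair hμ hμ2 hγ)) hle

end Auxiliary

/-- Proposition 3.6, claim 2: for a `C`-concave `φ` (not identically `-∞`)
and `π ∈ P_{a1⊕a2}`, one has `π ∈ ∂⁺_{t,C} φ` if and only if
`φ(pr¹_♯π) + φ^C(pr²_♯π) = ∫ c dπ`. -/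
theorem mem_totalSuperdiff_iff
    (c : X1 × X2 → ℝ≥0∞) (hc : LowerSemicontinuous c)
    (a1 : X1 → ℝ≥0∞) (a2 : X2 → ℝ≥0∞) (ha1 : Measurable a1) (ha2 : Measurable a2)
    (hdom : ∀ x1 x2, c (x1, x2) ≤ a1 x1 + a2 x2)
    (φ : ProbabilityMeasure X1 → EReal) (hφtop : ∀ μ ∈ Pa a1, φ μ ≠ ⊤)
    (hφ : KConcaveOn (OTCost c) (Pa a1) (Pa a2) φ)
    (π : ProbabilityMeasure (X1 × X2)) (hπ : π ∈ PaPair a1 a2) :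
    π ∈ TotalSuperdiff c a1 a2 φ ↔
      φ (margFst π) + KTransform (OTCost c) (Pa a1) φ (margSnd π)
        = (transportCost c π : EReal) := by
  classical
  have hcm : Measurable c := hc.measurable
  set μ1 := margFst π with hμ1def
  set μ2 := margSnd π with hμ2def
  set I := transportCost c π with hIdef
  have hI : I ≠ ⊤ := transportCost_ne_top ha1 ha2 hdom π hπ
  have hφ1top : φ μ1 ≠ ⊤ := hφtop μ1 hπ.1
  have hOTle : OTCost c μ1 μ2 ≤ I := iInf₂_le π (self_mem_coupling π)
  have hmargFirst : ∀ θ : ProbabilityMeasure (X1 × X2 × X1),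
      (θ : Measure (X1 × X2 × X1)).map (fun p => (p.1, p.2.1)) = (π : Measure (X1 × X2)) →
      margFirst3 θ = μ1 := by
    intro θ hθ
    apply ProbabilityMeasure.toMeasure_injective
    rw [margFirst3, ProbabilityMeasure.toMeasure_map, hμ1def, margFst,
      ProbabilityMeasure.toMeasure_map, ← hθ,
      Measure.map_map measurable_fst (by fun_prop)]
    rfl
  have hlint1 : ∀ θ : ProbabilityMeasure (X1 × X2 × X1),
      (θ : Measure (X1 × X2 × X1)).map (fun p => (p.1, p.2.1)) = (π : Measure (X1 × X2)) →
      ∫⁻ p, c (p.1, p.2.1) ∂(θ : Measure (X1 × X2 × X1)) = I := by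
    intro θ hθ
    have h := lintegral_map (μ := (θ : Measure (X1 × X2 × X1))) (f := c)
      (g := fun p : X1 × X2 × X1 => (p.1, p.2.1)) hcm (by fun_prop)
    rw [hθ] at h
    exact h.symm
  constructor
  · -- forward direction
    intro hsd
    -- Step 1: φ μ1 ≠ ⊥
    have hφ1bot : φ μ1 ≠ ⊥ := by
      intro hbot
      set θ0 : ProbabilityMeasure (X1 × X2 × X1) :=
        π.map ((by fun_prop : Measurable fun p : X1 × X2 =>
          (p.1, p.2, p.1)).aemeasurable) with hθ0def
      have hθ0m : (θ0 : Measure (X1 × X2 × X1))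
          = (π : Measure (X1 × X2)).map (fun p => (p.1, p.2, p.1)) := by
        rw [hθ0def, ProbabilityMeasure.toMeasure_map]
      have hpair : (θ0 : Measure (X1 × X2 × X1)).map (fun p => (p.1, p.2.1))
          = (π : Measure (X1 × X2)) := by
        rw [hθ0m, Measure.map_map (by fun_prop) (by fun_prop)]
        have hco : ((fun p : X1 × X2 × X1 => (p.1, p.2.1))
            ∘ (fun p : X1 × X2 => (p.1, p.2, p.1))) = id := by
          ext p : 1 <;> simp
        rw [hco, Measure.map_id]
      have hthird0 : margThird3 θ0 = μ1 := by
        apply ProbabilityMeasure.toMeasure_injective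
        rw [margThird3, ProbabilityMeasure.toMeasure_map, hθ0m,
          Measure.map_map (by fun_prop) (by fun_prop), hμ1def, margFst,
          ProbabilityMeasure.toMeasure_map]
        rfl
      have hpair2 : (θ0 : Measure (X1 × X2 × X1)).map (fun p => (p.2.2, p.2.1))
          = (π : Measure (X1 × X2)) := by
        rw [hθ0m, Measure.map_map (by fun_prop) (by fun_prop)]
        have hco : ((fun p : X1 × X2 × X1 => (p.2.2, p.2.1))
            ∘ (fun p : X1 × X2 => (p.1, p.2, p.1))) = id := by
          ext p : 1 <;> simp
        rw [hco, Measure.map_id]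
      have hi2 : ∫⁻ p, c (p.2.2, p.2.1) ∂(θ0 : Measure (X1 × X2 × X1)) = I := by
        have h := lintegral_map (μ := (θ0 : Measure (X1 × X2 × X1))) (f := c)
          (g := fun p : X1 × X2 × X1 => (p.2.2, p.2.1)) hcm (by fun_prop)
        rw [hpair2] at h
        exact h.symm
      have key := hsd.2 θ0 hpair (by rw [hthird0]; exact hπ.1)
      rw [hmargFirst θ0 hpair, hthird0, hbot, hlint1 θ0 hpair, hi2,
        coe_ennreal_eq_real I hI, ← EReal.coe_sub, sub_self, EReal.bot_sub] at key
      exact absurd key (by simp)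
    -- Step 2
    have hstep2 : ∀ μ ∈ Pa a1,
        (I : EReal) - φ μ1 ≤ ((OTCost c μ μ2 : ℝ≥0∞) : EReal) - φ μ := by
      intro μ hμ
      by_cases hμbot : φ μ = ⊥
      · rw [hμbot, EReal.sub_bot (by simp : ((OTCost c μ μ2 : ℝ≥0∞) : EReal) ≠ ⊥)]
        exact le_top
      have hμtop : φ μ ≠ ⊤ := hφtop μ hμ
      have hC : OTCost c μ μ2 ≠ ⊤ := OTCost_ne_top ha1 ha2 hdom hμ hπ.2
      rw [coe_ennreal_eq_real I hI, coe_ennreal_eq_real _ hC,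
        ← EReal.coe_toReal hφ1top hφ1bot, ← EReal.coe_toReal hμtop hμbot,
        ← EReal.coe_sub, ← EReal.coe_sub, EReal.coe_le_coe_iff]
      have key : ∀ ε : ℝ, 0 < ε →
          I.toReal - (φ μ1).toReal ≤ (OTCost c μ μ2).toReal - (φ μ).toReal + ε := by
        intro ε hε
        obtain ⟨γ, hγmem, hγlt⟩ : ∃ γ ∈ Coupling μ μ2,
            transportCost c γ < OTCost c μ μ2 + ENNReal.ofReal ε := by
          have h : OTCost c μ μ2 < OTCost c μ μ2 + ENNReal.ofReal ε :=
            ENNReal.lt_add_right hC (by simp [ENNReal.ofReal_eq_zero, not_le, hε])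
          conv_lhs at h => rw [OTCost]
          simpa [iInf_lt_iff] using h
        have hγPa := coupling_mem_PaPair hμ hπ.2 hγmem
        have hJ : transportCost c γ ≠ ⊤ := transportCost_ne_top ha1 ha2 hdom γ hγPa
        haveI : Nonempty X1 := μ1.nonempty
        set π' : Measure (X2 × X1) := (π : Measure (X1 × X2)).map Prod.swap with hπ'def
        set γ' : Measure (X2 × X1) := (γ : Measure (X1 × X2)).map Prod.swap with hγ'def
        haveI : IsProbabilityMeasure π' :=
          Measure.isProbabilityMeasure_map measurable_swap.aemeasurable
        haveI : IsProbabilityMeasure γ' :=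
          Measure.isProbabilityMeasure_map measurable_swap.aemeasurable
        have hfst : γ'.fst = π'.fst := by
          rw [hπ'def, hγ'def, Measure.fst, Measure.fst,
            Measure.map_map measurable_fst measurable_swap,
            Measure.map_map measurable_fst measurable_swap]
          show (γ : Measure (X1 × X2)).map Prod.snd = (π : Measure (X1 × X2)).map Prod.snd
          rw [hγmem.2]
          exact ((self_mem_coupling π).2).symm
        obtain ⟨θm, hθprob, hθm1, hθm2⟩ := exists_glue π' γ' hfst
        haveI := hθprob
        haveI hθprob2 : IsProbabilityMeasure
            (θm.map (fun p : X2 × X1 × X1 => (p.2.1, p.1, p.2.2))) :=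
          Measure.isProbabilityMeasure_map ((by fun_prop : Measurable fun p : X2 × X1 × X1 =>
            (p.2.1, p.1, p.2.2)).aemeasurable)
        set θ : ProbabilityMeasure (X1 × X2 × X1) :=
          ⟨θm.map (fun p : X2 × X1 × X1 => (p.2.1, p.1, p.2.2)), hθprob2⟩ with hθdef
        have hθcoe : (θ : Measure (X1 × X2 × X1))
            = θm.map (fun p : X2 × X1 × X1 => (p.2.1, p.1, p.2.2)) := rfl
        have hpair : (θ : Measure (X1 × X2 × X1)).map (fun p => (p.1, p.2.1))
            = (π : Measure (X1 × X2)) := by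
          rw [hθcoe, Measure.map_map (by fun_prop) (by fun_prop)]
          show θm.map (Prod.swap ∘ (fun p : X2 × X1 × X1 => (p.1, p.2.1)))
            = (π : Measure (X1 × X2))
          rw [← Measure.map_map measurable_swap (by fun_prop), hθm1, hπ'def,
            Measure.map_map measurable_swap measurable_swap]
          simp [Prod.swap_swap_eq, Measure.map_id]
        have hγside : (θ : Measure (X1 × X2 × X1)).map (fun p => (p.2.2, p.2.1))
            = (γ : Measure (X1 × X2)) := by
          rw [hθcoe, Measure.map_map (by fun_prop) (by fun_prop)]
          show θm.map (Prod.swap ∘ (fun p : X2 × X1 × X1 => (p.1, p.2.2)))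
            = (γ : Measure (X1 × X2))
          rw [← Measure.map_map measurable_swap (by fun_prop), hθm2, hγ'def,
            Measure.map_map measurable_swap measurable_swap]
          simp [Prod.swap_swap_eq, Measure.map_id]
        have hthird : margThird3 θ = μ := by
          apply ProbabilityMeasure.toMeasure_injective
          rw [margThird3, ProbabilityMeasure.toMeasure_map]
          show (θ : Measure (X1 × X2 × X1)).map
              (Prod.fst ∘ (fun p : X1 × X2 × X1 => (p.2.2, p.2.1))) = (μ : Measure X1)
          rw [← Measure.map_map measurable_fst (by fun_prop), hγside, hγmem.1]
        have hi2 : ∫⁻ p, c (p.2.2, p.2.1) ∂(θ : Measure (X1 × X2 × X1))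
            = transportCost c γ := by
          have h := lintegral_map (μ := (θ : Measure (X1 × X2 × X1))) (f := c)
            (g := fun p : X1 × X2 × X1 => (p.2.2, p.2.1)) hcm (by fun_prop)
          rw [hγside] at h
          exact h.symm
        have key0 := hsd.2 θ hpair (by rw [hthird]; exact hμ)
        rw [hmargFirst θ hpair, hthird, hlint1 θ hpair, hi2,
          coe_ennreal_eq_real I hI, coe_ennreal_eq_real _ hJ,
          ← EReal.coe_toReal hφ1top hφ1bot, ← EReal.coe_toReal hμtop hμbot,
          ← EReal.coe_sub, ← EReal.coe_sub, EReal.coe_le_coe_iff] at key0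
        have hJle : (transportCost c γ).toReal ≤ (OTCost c μ μ2).toReal + ε := by
          have h2 := (ENNReal.toReal_le_toReal hJ
            (ENNReal.add_ne_top.2 ⟨hC, ENNReal.ofReal_ne_top⟩)).mpr hγlt.le
          rwa [ENNReal.toReal_add hC ENNReal.ofReal_ne_top,
            ENNReal.toReal_ofReal hε.le] at h2
        linarith
      by_contra hcon
      push_neg at hcon
      have := key ((I.toReal - (φ μ1).toReal
        - ((OTCost c μ μ2).toReal - (φ μ).toReal)) / 2) (by linarith)
      linarith
    have hKT : KTransform (OTCost c) (Pa a1) φ μ2 = (I : EReal) - φ μ1 := by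
      simp only [KTransform]
      refine le_antisymm ?_ (le_iInf₂ hstep2)
      refine le_trans (iInf₂_le μ1 hπ.1) ?_
      exact EReal.sub_le_sub (EReal.coe_ennreal_le_coe_ennreal_iff.2 hOTle) le_rfl
    rw [hKT, ← EReal.coe_toReal hφ1top hφ1bot, coe_ennreal_eq_real I hI,
      ← EReal.coe_sub, ← EReal.coe_add, EReal.coe_eq_coe_iff]
    ring
  · -- reverse direction
    intro heq
    refine ⟨hπ, ?_⟩
    intro θ hθ1 hθ3
    have hφ1bot : φ μ1 ≠ ⊥ := by
      intro hbot
      have h0 := EReal.coe_ennreal_nonneg I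
      rw [← heq, hbot, EReal.bot_add] at h0
      exact absurd h0 (by simp)
    have hmf := hmargFirst θ hθ1
    have hi1 := hlint1 θ hθ1
    set γθ : ProbabilityMeasure (X1 × X2) :=
      θ.map ((by fun_prop : Measurable fun p : X1 × X2 × X1 =>
        (p.2.2, p.2.1)).aemeasurable) with hγθdef
    have hγθcoe : (γθ : Measure (X1 × X2))
        = (θ : Measure (X1 × X2 × X1)).map (fun p => (p.2.2, p.2.1)) := by
      rw [hγθdef, ProbabilityMeasure.toMeasure_map]
    have hγmem : γθ ∈ Coupling (margThird3 θ) μ2 := by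
      constructor
      · rw [hγθcoe, Measure.map_map measurable_fst (by fun_prop)]
        rw [margThird3, ProbabilityMeasure.toMeasure_map]
        rfl
      · rw [hγθcoe, Measure.map_map measurable_snd (by fun_prop)]
        show (θ : Measure (X1 × X2 × X1)).map
            (Prod.snd ∘ (fun p : X1 × X2 × X1 => (p.1, p.2.1))) = (μ2 : Measure X2)
        rw [← Measure.map_map measurable_snd (by fun_prop), hθ1]
        exact (self_mem_coupling π).2
    have hi2 : ∫⁻ p, c (p.2.2, p.2.1) ∂(θ : Measure (X1 × X2 × X1))
        = transportCost c γθ := by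
      have h := lintegral_map (μ := (θ : Measure (X1 × X2 × X1))) (f := c)
        (g := fun p : X1 × X2 × X1 => (p.2.2, p.2.1)) hcm (by fun_prop)
      rw [← hγθcoe] at h
      exact h.symm
    rw [hi1, hi2, hmf]
    by_cases hJ : transportCost c γθ = ⊤
    · rw [hJ, EReal.coe_ennreal_top, EReal.sub_top]
      exact bot_le
    by_cases hμ'bot : φ (margThird3 θ) = ⊥
    · rw [hμ'bot, EReal.sub_bot hφ1bot]
      exact le_top
    have hμ'top : φ (margThird3 θ) ≠ ⊤ := hφtop _ hθ3
    have hC'le : OTCost c (margThird3 θ) μ2 ≤ transportCost c γθ := iInf₂_le γθ hγmem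
    have hC' : OTCost c (margThird3 θ) μ2 ≠ ⊤ := ne_top_of_le_ne_top hJ hC'le
    have hKTle : KTransform (OTCost c) (Pa a1) φ μ2
        ≤ ((OTCost c (margThird3 θ) μ2 : ℝ≥0∞) : EReal) - φ (margThird3 θ) := by
      simp only [KTransform]
      exact iInf₂_le _ hθ3
    have hTbot : KTransform (OTCost c) (Pa a1) φ μ2 ≠ ⊥ := by
      intro h
      rw [h, EReal.add_bot] at heq
      have h0 := EReal.coe_ennreal_nonneg I
      rw [← heq] at h0
      exact absurd h0 (by simp)
    have hTtop : KTransform (OTCost c) (Pa a1) φ μ2 ≠ ⊤ := by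
      intro h
      rw [h, ← EReal.coe_toReal hφ1top hφ1bot, EReal.coe_add_top] at heq
      exact hI (EReal.coe_ennreal_eq_top_iff.mp heq.symm)
    have heqR : (φ μ1).toReal + (KTransform (OTCost c) (Pa a1) φ μ2).toReal = I.toReal := by
      rw [← EReal.coe_eq_coe_iff, EReal.coe_add, EReal.coe_toReal hTtop hTbot,
        EReal.coe_toReal hφ1top hφ1bot, ← coe_ennreal_eq_real I hI]
      exact heq
    have hKTleR : (KTransform (OTCost c) (Pa a1) φ μ2).toReal
        ≤ (OTCost c (margThird3 θ) μ2).toReal - (φ (margThird3 θ)).toReal := by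
      rw [← EReal.coe_le_coe_iff, EReal.coe_sub, EReal.coe_toReal hTtop hTbot,
        EReal.coe_toReal hμ'top hμ'bot, ← coe_ennreal_eq_real _ hC']
      exact hKTle
    have hCJ : (OTCost c (margThird3 θ) μ2).toReal ≤ (transportCost c γθ).toReal :=
      ENNReal.toReal_mono hJ hC'le
    rw [coe_ennreal_eq_real I hI, coe_ennreal_eq_real _ hJ,
      ← EReal.coe_toReal hφ1top hφ1bot, ← EReal.coe_toReal hμ'top hμ'bot,
      ← EReal.coe_sub, ← EReal.coe_sub, EReal.coe_le_coe_iff]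
    linarith

end OTRM
end
end

section
/- Let φ1 : P_{a1}(X1) → [−∞,+∞) be C-concave and not identically −∞. Then the total C-superdifferential ∂⁺_{t,C} φ1 is a totally C-cyclically monotone subset of P_{a1⊕a2}(X1×X2). -/
open MeasureTheory Topology ENNReal Set

noncomputable section

namespace OTRM

variable {X1 X2 : Type*}
  [MeasurableSpace X1] [TopologicalSpace X1] [BorelSpace X1] [PolishSpace X1]
  [MeasurableSpace X2] [TopologicalSpace X2] [BorelSpace X2] [PolishSpace X2]

/-- Proposition 3.6, claim 3: for a `C`-concave `φ` (not identically `-∞`),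
the total `C`-superdifferential `∂⁺_{t,C} φ` is a totally `C`-cyclically monotone subset of
`P_{a1⊕a2}(X1 × X2)`. -/
theorem totalSuperdiff_totallyCCyclMono
    (c : X1 × X2 → ℝ≥0∞) (hc : LowerSemicontinuous c)
    (a1 : X1 → ℝ≥0∞) (a2 : X2 → ℝ≥0∞) (ha1 : Measurable a1) (ha2 : Measurable a2)
    (hdom : ∀ x1 x2, c (x1, x2) ≤ a1 x1 + a2 x2)
    (φ : ProbabilityMeasure X1 → EReal) (hφtop : ∀ μ ∈ Pa a1, φ μ ≠ ⊤)
    (hφ : KConcaveOn (OTCost c) (Pa a1) (Pa a2) φ) :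
    TotalSuperdiff c a1 a2 φ ⊆ PaPair a1 a2 ∧
      TotallyCCyclMono c (TotalSuperdiff c a1 a2 φ) := by
  have hcm : Measurable c := hc.measurable
  refine ⟨fun π h => h.1, ?_⟩
  intro N hN θ hmem σ
  -- the n-th pair marginal
  set πn : Fin N → ProbabilityMeasure (X1 × X2) :=
    fun n => θ.map (measurable_pi_apply n).aemeasurable with hπn
  -- its first marginal
  set μn : Fin N → ProbabilityMeasure X1 := fun n => margFst (πn n) with hμn
  have hπnm : ∀ n, ((πn n : Measure (X1 × X2)))
      = (θ : Measure (Fin N → X1 × X2)).map (fun ω => ω n) := fun n => by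
    simp [hπn, ProbabilityMeasure.toMeasure_map]
  have hμnm : ∀ n, ((μn n : Measure X1))
      = (θ : Measure (Fin N → X1 × X2)).map (fun ω => (ω n).1) := fun n => by
    simp only [hμn, margFst, ProbabilityMeasure.toMeasure_map, hπnm]
    rw [Measure.map_map measurable_fst (measurable_pi_apply n)]
    rfl
  -- finite a-moments of the marginals
  have hA1 : ∀ n, (∫⁻ ω, a1 (ω n).1 ∂(θ : Measure (Fin N → X1 × X2))) ≠ ⊤ := by
    intro n
    have h := (hmem n).1.1
    simp only [Pa, mem_setOf_eq] at h
    rwa [show margFst (θ.map (measurable_pi_apply n).aemeasurable) = μn n from rfl,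
      hμnm n, lintegral_map ha1 (measurable_pi_apply n).fst] at h
  have hA2 : ∀ n, (∫⁻ ω, a2 (ω n).2 ∂(θ : Measure (Fin N → X1 × X2))) ≠ ⊤ := by
    intro n
    have h := (hmem n).1.2
    simp only [Pa, mem_setOf_eq] at h
    have hm : ((margSnd (πn n) : Measure X2))
        = (θ : Measure (Fin N → X1 × X2)).map (fun ω => (ω n).2) := by
      simp only [margSnd, ProbabilityMeasure.toMeasure_map, hπnm]
      rw [Measure.map_map measurable_snd (measurable_pi_apply n)]
      rfl
    rwa [show margSnd (θ.map (measurable_pi_apply n).aemeasurable) = margSnd (πn n) from rfl,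
      hm, lintegral_map ha2 (measurable_pi_apply n).snd] at h
  -- the basic cost integrals
  set J : Fin N → Fin N → ℝ≥0∞ :=
    fun m n => ∫⁻ ω, c ((ω m).1, (ω n).2) ∂(θ : Measure (Fin N → X1 × X2)) with hJ
  have hmeasmn : ∀ m n : Fin N, Measurable
      (fun ω : Fin N → X1 × X2 => c ((ω m).1, (ω n).2)) := fun m n =>
    hcm.comp ((measurable_pi_apply m).fst.prodMk (measurable_pi_apply n).snd)
  have hJfin : ∀ m n, J m n ≠ ⊤ := by
    intro m n
    have hle : J m n ≤ (∫⁻ ω, a1 (ω m).1 ∂(θ : Measure (Fin N → X1 × X2)))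
        + ∫⁻ ω, a2 (ω n).2 ∂(θ : Measure (Fin N → X1 × X2)) := by
      have hma : Measurable fun ω : Fin N → X1 × X2 => a1 (ω m).1 :=
        ha1.comp (measurable_pi_apply m).fst
      rw [← lintegral_add_left hma]
      exact lintegral_mono fun ω => hdom _ _
    exact ne_top_of_le_ne_top (ENNReal.add_ne_top.2 ⟨hA1 m, hA2 n⟩) hle
  -- auxiliary: applying the superdifferential inequality to a triple pushforward
  have hkey : ∀ m n : Fin N,
      ((J n n : EReal)) - ((J m n : EReal)) ≤ φ (μn n) - φ (μn m) := by
    intro m n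
    set f : (Fin N → X1 × X2) → X1 × X2 × X1 :=
      fun ω => ((ω n).1, (ω n).2, (ω m).1) with hf
    have hfm : Measurable f :=
      (measurable_pi_apply n).fst.prodMk
        ((measurable_pi_apply n).snd.prodMk (measurable_pi_apply m).fst)
    set Θ : ProbabilityMeasure (X1 × X2 × X1) := θ.map hfm.aemeasurable with hΘ
    have hΘm : (Θ : Measure (X1 × X2 × X1)) = (θ : Measure (Fin N → X1 × X2)).map f := by
      simp [hΘ, ProbabilityMeasure.toMeasure_map]
    have h1 : (Θ : Measure (X1 × X2 × X1)).map (fun p => (p.1, p.2.1))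
        = (πn n : Measure (X1 × X2)) := by
      rw [hΘm, hπnm, Measure.map_map (measurable_fst.prodMk measurable_snd.fst) hfm]
      rfl
    have h3 : margThird3 Θ = μn m := by
      apply Subtype.ext
      show (margThird3 Θ : Measure X1) = (μn m : Measure X1)
      rw [margThird3, ProbabilityMeasure.toMeasure_map, hΘm, hμnm,
        Measure.map_map (measurable_snd.comp measurable_snd) hfm]
      rfl
    have h1' : margFirst3 Θ = μn n := by
      apply Subtype.ext
      show (margFirst3 Θ : Measure X1) = (μn n : Measure X1)
      rw [margFirst3, ProbabilityMeasure.toMeasure_map, hΘm, hμnm,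
        Measure.map_map measurable_fst hfm]
      rfl
    have h3Pa : margThird3 Θ ∈ Pa a1 := by rw [h3]; exact (hmem m).1.1
    have := (hmem n).2 Θ h1 h3Pa
    rw [h3, h1'] at this
    have hi1 : (∫⁻ p, c (p.1, p.2.1) ∂(Θ : Measure (X1 × X2 × X1))) = J n n := by
      have hc1 : Measurable fun p : X1 × X2 × X1 => c (p.1, p.2.1) :=
        hcm.comp (measurable_fst.prodMk measurable_snd.fst)
      rw [hΘm, lintegral_map hc1 hfm]
    have hi2 : (∫⁻ p, c (p.2.2, p.2.1) ∂(Θ : Measure (X1 × X2 × X1))) = J m n := by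
      have hc2 : Measurable fun p : X1 × X2 × X1 => c (p.2.2, p.2.1) :=
        hcm.comp (measurable_snd.snd.prodMk measurable_snd.fst)
      rw [hΘm, lintegral_map hc2 hfm]
    rwa [hi1, hi2] at this
  -- φ is finite on the first marginals
  have hφbot : ∀ n, φ (μn n) ≠ ⊥ := by
    intro n hbot
    have h := hkey n n
    rw [hbot] at h
    rw [EReal.bot_sub] at h
    have hJE : (J n n : EReal) ≠ ⊤ := by
      simpa [EReal.coe_ennreal_eq_top_iff] using hJfin n n
    have : (J n n : EReal) - (J n n : EReal) = 0 := by
      lift (J n n : EReal) to ℝ using ⟨hJE, by simp⟩ with r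
      rw [← EReal.coe_sub]
      norm_num
    rw [this] at h
    exact absurd h (by simp)
  have hφtop' : ∀ n, φ (μn n) ≠ ⊤ := fun n => hφtop _ (hmem n).1.1
  -- real-valued versions
  set rφ : Fin N → ℝ := fun n => (φ (μn n)).toReal with hrφ
  have hφeq : ∀ n, φ (μn n) = (rφ n : EReal) := fun n =>
    (EReal.coe_toReal (hφtop' n) (hφbot n)).symm
  set Jr : Fin N → Fin N → ℝ := fun m n => (J m n).toReal with hJr
  have hJeq : ∀ m n, (J m n : EReal) = ((Jr m n : ℝ) : EReal) := by
    intro m n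
    have hne : (J m n : EReal) ≠ ⊤ := by
      simpa [EReal.coe_ennreal_eq_top_iff] using hJfin m n
    show (J m n : EReal) = (((J m n).toReal : ℝ) : EReal)
    rw [← EReal.toReal_coe_ennreal]
    exact (EReal.coe_toReal hne (by simp)).symm
  have hkeyR : ∀ m n : Fin N, Jr n n - Jr m n ≤ rφ n - rφ m := by
    intro m n
    have h := hkey m n
    rw [hJeq n n, hJeq m n, hφeq n, hφeq m, ← EReal.coe_sub, ← EReal.coe_sub] at h
    exact_mod_cast h
  -- sum the inequalities; the φ terms telescope
  have hsumR : (∑ n, Jr n n) ≤ ∑ n, Jr (σ⁻¹ n) n := by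
    have h1 : (∑ n, Jr n n) - (∑ n, Jr (σ⁻¹ n) n)
        ≤ (∑ n, rφ n) - (∑ n, rφ (σ⁻¹ n)) := by
      rw [← Finset.sum_sub_distrib, ← Finset.sum_sub_distrib]
      exact Finset.sum_le_sum fun n _ => hkeyR (σ⁻¹ n) n
    have h2 : (∑ n, rφ (σ⁻¹ n)) = ∑ n, rφ n := Equiv.sum_comp σ⁻¹ rφ
    rw [h2, sub_self] at h1
    linarith
  -- conclude in ℝ≥0∞
  have hLHS : (∫⁻ ω, ∑ i, c (ω i) ∂(θ : Measure (Fin N → X1 × X2))) = ∑ n, J n n := by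
    rw [lintegral_finset_sum _ fun i _ =>
      show Measurable fun ω : Fin N → X1 × X2 => c (ω i) from hcm.comp (measurable_pi_apply i)]
  have hRHS : (∫⁻ ω, ∑ i, c ((ω i).1, (ω (σ i)).2) ∂(θ : Measure (Fin N → X1 × X2)))
      = ∑ n, J n (σ n) := by
    rw [lintegral_finset_sum _ fun i _ => hmeasmn i (σ i)]
  have hre : (∑ n, J n (σ n)) = ∑ n, J (σ⁻¹ n) n := by
    rw [← Equiv.sum_comp σ (fun n => J (σ⁻¹ n) n)]
    simp
  rw [hLHS, hRHS, hre]
  have hfin1 : (∑ n, J n n) ≠ ⊤ := ENNReal.sum_ne_top.2 fun n _ => hJfin n n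
  have hfin2 : (∑ n : Fin N, J (σ⁻¹ n) n) ≠ ⊤ := ENNReal.sum_ne_top.2 fun n _ => hJfin _ n
  rw [← ENNReal.toReal_le_toReal hfin1 hfin2,
    ENNReal.toReal_sum (fun n _ => hJfin n n), ENNReal.toReal_sum (fun n _ => hJfin _ n)]
  exact hsumR

end OTRM
end
end

section
/- Let F ⊆ P_{a1⊕a2}(X1×X2) be a totally C-cyclically monotone set. Then every π ∈ F is a c-optimal coupling between its marginals, i.e. ∫ c dπ = C(pr¹_♯π, pr²_♯π). -/
/-!
Let `π ∈ F` and let `γ` be any coupling of the marginals of `π`. Gluing the disintegrations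
`γ(dy | x)` and `π(dx | y)` gives a Markov kernel `K` on `X1 × X2`, `(x, y) ↦ (x', y')` with
`y' ~ γ(· | x)` and `x' ~ π(· | y')`, for which `π` is invariant and `(x, y')` has law `γ`.
The first `n + 1` steps of the stationary chain with kernel `K` form a plan `θ` all of whose
pair marginals equal `π`, and total cyclical monotonicity for the cyclic shift gives
`(n + 1) ∫ c dπ ≤ n ∫ c dγ + ∫ a1 d(pr¹_♯π) + ∫ a2 d(pr²_♯π)`,
the last two terms bounding the one cost `c(x_{1,n}, x_{2,0})` that closes the cycle.
Letting `n → ∞` yields `∫ c dπ ≤ ∫ c dγ`.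
-/

open MeasureTheory Topology ENNReal Set

noncomputable section

namespace OTRM

variable {X1 X2 : Type*}
  [MeasurableSpace X1] [TopologicalSpace X1] [BorelSpace X1] [PolishSpace X1]
  [MeasurableSpace X2] [TopologicalSpace X2] [BorelSpace X2] [PolishSpace X2]

open ProbabilityTheory

lemma le_of_forall_succ_mul_le_mul_add {a b C : ℝ≥0∞} (hC : C ≠ ⊤)
    (h : ∀ n : ℕ, (n + 1) * a ≤ n * b + C) : a ≤ b := by
  by_contra! hba
  obtain ⟨n, hn⟩ := ENNReal.exists_nat_mul_gt (tsub_pos_of_lt hba).ne' hC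
  have hnb : (n : ℝ≥0∞) * b ≠ ⊤ := ENNReal.mul_ne_top (ENNReal.natCast_ne_top n) hba.ne_top
  refine (h n).not_gt ?_
  calc (n : ℝ≥0∞) * b + C
      < n * b + n * (a - b) := ENNReal.add_lt_add_left hnb hn
    _ = n * a := by rw [← mul_add, add_tsub_cancel_of_le hba.le]
    _ ≤ (n + 1) * a := by gcongr; exact le_self_add

section Kernels

variable {A B C : Type*} [MeasurableSpace A] [MeasurableSpace B] [MeasurableSpace C]

lemma comap_comp_eq_comp_map (ν : Measure A) {f : A → B} (hf : Measurable f) (κ : Kernel B C) :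
    κ.comap f hf ∘ₘ ν = κ ∘ₘ ν.map f := by
  rw [← Kernel.comp_deterministic_eq_comap, ← Measure.comp_assoc,
    Measure.deterministic_comp_eq_map]

lemma map_prodMap_compProd_comap (ν : Measure A) [SFinite ν] {f : A → B} (hf : Measurable f)
    (κ : Kernel B C) [IsSFiniteKernel κ] :
    (ν ⊗ₘ κ.comap f hf).map (Prod.map f id) = ν.map f ⊗ₘ κ := by
  have hfid : Measurable (Prod.map f (id : C → C)) := hf.prodMap measurable_id
  ext s hs
  rw [Measure.map_apply hfid hs, Measure.compProd_apply (hs.preimage hfid),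
    Measure.compProd_apply hs, lintegral_map (Kernel.measurable_kernel_prodMk_left hs) hf]
  rfl

end Kernels

section MarkovChain

variable {A : Type*} [MeasurableSpace A]

def homKernel (K : Kernel A A) (n : ℕ) : Kernel (Π _ : Finset.Iic n, A) A :=
  K.comap (fun x => x ⟨n, Finset.mem_Iic.2 le_rfl⟩) (measurable_pi_apply _)

instance (K : Kernel A A) [IsMarkovKernel K] (n : ℕ) : IsMarkovKernel (homKernel K n) := by
  unfold homKernel; infer_instance

def markovChain (μ : Measure A) (K : Kernel A A) [IsMarkovKernel K] : Measure (ℕ → A) :=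
  Kernel.trajMeasure (X := fun _ => A) μ (homKernel K)

variable {μ : Measure A} {K : Kernel A A} [IsMarkovKernel K]

instance [IsProbabilityMeasure μ] : IsProbabilityMeasure (markovChain μ K) := by
  unfold markovChain; infer_instance

lemma markovChain_map_eval_zero : (markovChain μ K).map (· 0) = μ := by
  have h0 : (fun x : ℕ → A => x 0) =
      (fun y : (Π _ : Finset.Iic 0, A) => y ⟨0, Finset.mem_Iic.2 le_rfl⟩) ∘
        Preorder.frestrictLe 0 := rfl
  rw [h0, ← Measure.map_map (measurable_pi_apply _) (by fun_prop), markovChain,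
    Kernel.trajMeasure, Measure.map_comp _ _ (by fun_prop), Kernel.traj_map_frestrictLe,
    Kernel.partialTraj_self, Measure.id_comp,
    Measure.map_map (measurable_pi_apply _) (by fun_prop)]
  exact Measure.map_id

lemma markovChain_map_eval_pair [IsProbabilityMeasure μ] (n : ℕ) :
    (markovChain μ K).map (fun x => (x n, x (n + 1))) = (markovChain μ K).map (· n) ⊗ₘ K := by
  let last : (Π _ : Finset.Iic n, A) → A := fun x => x ⟨n, Finset.mem_Iic.2 le_rfl⟩
  have hn : Measurable last := measurable_pi_apply _
  have h := congrArg (Measure.map (Prod.map last id))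
    (Kernel.map_frestrictLe_trajMeasure_compProd_eq_map_trajMeasure
      (X := fun _ => A) (μ₀ := μ) (κ := homKernel K) (a := n))
  rw [homKernel, map_prodMap_compProd_comap _ hn, Measure.map_map hn (by fun_prop),
    Measure.map_map (by fun_prop) (by fun_prop)] at h
  exact h.symm

lemma markovChain_map_eval_of_comp_eq [IsProbabilityMeasure μ] (hμ : K ∘ₘ μ = μ) (n : ℕ) :
    (markovChain μ K).map (· n) = μ := by
  induction n with
  | zero => exact markovChain_map_eval_zero
  | succ n ih =>
    calc (markovChain μ K).map (· (n + 1))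
        = ((markovChain μ K).map (fun x => (x n, x (n + 1)))).map Prod.snd := by
          rw [Measure.map_map measurable_snd (by fun_prop)]; rfl
      _ = μ := by
          rw [markovChain_map_eval_pair, ih, ← Measure.snd, Measure.snd_compProd, hμ]

lemma markovChain_map_eval_pair_of_comp_eq [IsProbabilityMeasure μ] (hμ : K ∘ₘ μ = μ) (n : ℕ) :
    (markovChain μ K).map (fun x => (x n, x (n + 1))) = μ ⊗ₘ K := by
  rw [markovChain_map_eval_pair, markovChain_map_eval_of_comp_eq hμ]

end MarkovChain

section Gluing

variable {X Y : Type*} [MeasurableSpace X] [StandardBorelSpace X] [MeasurableSpace Y]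
  [StandardBorelSpace Y]

lemma exists_markovKernel_comp_eq_self_of_fst_snd_eq (π γ : Measure (X × Y))
    [IsProbabilityMeasure π] [IsFiniteMeasure γ] (hfst : γ.fst = π.fst) (hsnd : γ.snd = π.snd) :
    ∃ K : Kernel (X × Y) (X × Y), IsMarkovKernel K ∧ K ∘ₘ π = π ∧
      (π ⊗ₘ K).map (fun p => (p.1.1, p.2.2)) = γ := by
  obtain ⟨x, y⟩ := nonempty_of_isProbabilityMeasure π
  have : Nonempty X := ⟨x⟩
  have : Nonempty Y := ⟨y⟩
  set η := γ.condKernel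
  set κ := (π.map Prod.swap).condKernel
  set J : Kernel X (X × Y) := (κ ×ₖ Kernel.id) ∘ₖ η
  have hγ : π.fst ⊗ₘ η = γ := hfst ▸ γ.disintegrate η
  have hπ : π.snd ⊗ₘ κ = π.map Prod.swap := by
    simpa [Measure.fst_map_swap] using (π.map Prod.swap).disintegrate κ
  refine ⟨J.comap Prod.fst measurable_fst, inferInstance, ?_, ?_⟩
  · calc J.comap Prod.fst measurable_fst ∘ₘ π
        = (κ ×ₖ Kernel.id) ∘ₘ (η ∘ₘ π.fst) := by
          rw [comap_comp_eq_comp_map, Measure.comp_assoc]; rfl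
      _ = (Kernel.swap Y X ∘ₖ (Kernel.id ×ₖ κ)) ∘ₘ π.snd := by
          rw [← Measure.snd_compProd π.fst η, hγ, hsnd, Kernel.swap_prod]
      _ = π := by
          rw [← Measure.comp_assoc, ← Measure.compProd_eq_comp_prod, hπ, Kernel.swap,
            Measure.deterministic_comp_eq_map, Measure.map_map measurable_swap measurable_swap,
            Prod.swap_swap_eq, Measure.map_id]
  · have hsplit : (fun p : (X × Y) × (X × Y) => (p.1.1, p.2.2)) =
        Prod.map id Prod.snd ∘ Prod.map Prod.fst id := rfl
    rw [hsplit, ← Measure.map_map (by fun_prop) (by fun_prop),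
      map_prodMap_compProd_comap _ measurable_fst, ← Measure.compProd_map measurable_snd,
      Kernel.map_comp, ← Kernel.snd_eq, Kernel.snd_prod, Kernel.id_comp]
    exact hγ

end Gluing

section CyclicChain

variable {Y1 Y2 : Type*} [MeasurableSpace Y1] [MeasurableSpace Y2]

lemma succ_mul_transportCost_le (c : Y1 × Y2 → ℝ≥0∞) (hc : Measurable c)
    (a1 : Y1 → ℝ≥0∞) (a2 : Y2 → ℝ≥0∞) (ha1 : Measurable a1) (ha2 : Measurable a2)
    (hdom : ∀ x1 x2, c (x1, x2) ≤ a1 x1 + a2 x2)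
    {F : Set (ProbabilityMeasure (Y1 × Y2))} (hmono : TotallyCCyclMono c F)
    {π γ : ProbabilityMeasure (Y1 × Y2)} (hπ : π ∈ F) {n : ℕ}
    (θ : Measure (Fin (n + 1) → Y1 × Y2)) [IsProbabilityMeasure θ] (hθ : ∀ i, θ.map (· i) = π)
    (hθγ : ∀ j : Fin n, θ.map (fun ω => ((ω j.castSucc).1, (ω j.succ).2)) = γ) :
    (n + 1) * transportCost c π ≤
      n * transportCost c γ + ∫⁻ p, a1 p.1 + a2 p.2 ∂(π : Measure (Y1 × Y2)) := by
  have heval {f : Y1 × Y2 → ℝ≥0∞} (hf : Measurable f) (i : Fin (n + 1)) :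
      ∫⁻ ω, f (ω i) ∂θ = ∫⁻ z, f z ∂π := by
    rw [← lintegral_map hf (measurable_pi_apply i), hθ i]
  have hcross (j : Fin n) : ∫⁻ ω, c ((ω j.castSucc).1, (ω j.succ).2) ∂θ = transportCost c γ := by
    rw [← lintegral_map hc (by fun_prop), hθγ j]; rfl
  let θ' : ProbabilityMeasure (Fin (n + 1) → Y1 × Y2) := ⟨θ, inferInstance⟩
  have hmem (i : Fin (n + 1)) : θ'.map (measurable_pi_apply i).aemeasurable ∈ F := by
    convert hπ
    exact Subtype.ext ((θ'.toMeasure_map _).trans (hθ i))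
  calc (n + 1) * transportCost c π
      = ∫⁻ ω, ∑ i, c (ω i) ∂θ := by
        rw [lintegral_finsetSum _ fun i _ => by fun_prop]
        simp [heval hc, transportCost]
    _ ≤ ∫⁻ ω, ∑ i, c ((ω i).1, (ω (Equiv.addRight 1 i)).2) ∂θ :=
        hmono (n + 1) n.succ_pos θ' hmem (Equiv.addRight 1)
    _ = ∑ j : Fin n, ∫⁻ ω, c ((ω j.castSucc).1, (ω j.succ).2) ∂θ
          + ∫⁻ ω, c ((ω (Fin.last n)).1, (ω 0).2) ∂θ := by
        rw [lintegral_finsetSum _ fun i _ => by fun_prop, Fin.sum_univ_castSucc]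
        simp [Fin.coeSucc_eq_succ]
    _ ≤ n * transportCost c γ + ∫⁻ p, a1 p.1 + a2 p.2 ∂(π : Measure (Y1 × Y2)) := by
        gcongr ?_ + ?_
        · simp [hcross]
        · calc ∫⁻ ω, c ((ω (Fin.last n)).1, (ω 0).2) ∂θ
              ≤ ∫⁻ ω, a1 (ω (Fin.last n)).1 + a2 (ω 0).2 ∂θ := lintegral_mono fun ω => hdom _ _
            _ = ∫⁻ p, a1 p.1 + a2 p.2 ∂(π : Measure (Y1 × Y2)) := by
              rw [lintegral_add_left (by fun_prop), lintegral_add_left (by fun_prop),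
                heval (f := fun z => a1 z.1) (by fun_prop),
                heval (f := fun z => a2 z.2) (by fun_prop)]

end CyclicChain

lemma transportCost_le_of_fst_snd_eq (c : X1 × X2 → ℝ≥0∞) (hc : Measurable c)
    (a1 : X1 → ℝ≥0∞) (a2 : X2 → ℝ≥0∞) (ha1 : Measurable a1) (ha2 : Measurable a2)
    (hdom : ∀ x1 x2, c (x1, x2) ≤ a1 x1 + a2 x2)
    {F : Set (ProbabilityMeasure (X1 × X2))} (hF : F ⊆ PaPair a1 a2)
    (hmono : TotallyCCyclMono c F) {π γ : ProbabilityMeasure (X1 × X2)} (hπ : π ∈ F)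
    (hfst : (γ : Measure (X1 × X2)).fst = (π : Measure (X1 × X2)).fst)
    (hsnd : (γ : Measure (X1 × X2)).snd = (π : Measure (X1 × X2)).snd) :
    transportCost c π ≤ transportCost c γ := by
  obtain ⟨K, hK, hKπ, hKγ⟩ :=
    exists_markovKernel_comp_eq_self_of_fst_snd_eq (π : Measure (X1 × X2)) γ hfst hsnd
  have hmoment : ∫⁻ p, a1 p.1 + a2 p.2 ∂(π : Measure (X1 × X2)) ≠ ⊤ := by
    obtain ⟨h1, h2⟩ := hF hπ
    simp only [Pa, margFst, margSnd, Set.mem_ofPred_eq, ProbabilityMeasure.toMeasure_map,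
      lintegral_map ha1 measurable_fst, lintegral_map ha2 measurable_snd] at h1 h2
    rw [lintegral_add_left (by fun_prop)]
    exact ENNReal.add_ne_top.2 ⟨h1, h2⟩
  refine le_of_forall_succ_mul_le_mul_add hmoment fun n => ?_
  let θ := (markovChain (π : Measure (X1 × X2)) K).map fun x (i : Fin (n + 1)) => x i
  have hres : Measurable fun (x : ℕ → X1 × X2) (i : Fin (n + 1)) => x i :=
    measurable_pi_lambda _ fun i => measurable_pi_apply _
  have : IsProbabilityMeasure θ := Measure.isProbabilityMeasure_map hres.aemeasurable
  refine succ_mul_transportCost_le c hc a1 a2 ha1 ha2 hdom hmono hπ θ (fun i => ?_) (fun j => ?_)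
  · rw [Measure.map_map (by fun_prop) hres]
    exact markovChain_map_eval_of_comp_eq hKπ i
  · have hpair : (fun x : ℕ → X1 × X2 => ((x j).1, (x (j + 1)).2)) =
        (fun p : (X1 × X2) × (X1 × X2) => (p.1.1, p.2.2)) ∘ fun x => (x j, x (j + 1)) := rfl
    rw [Measure.map_map (by fun_prop) hres]
    simp only [Function.comp_def, Fin.val_castSucc, Fin.val_succ]
    rw [hpair, ← Measure.map_map (by fun_prop) (by fun_prop),
      markovChain_map_eval_pair_of_comp_eq hKπ, hKγ]

/-- Proposition 3.7, claim 1: if `F ⊆ P_{a1⊕a2}(X1 × X2)` is totally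
`C`-cyclically monotone, then every `π ∈ F` is a `c`-optimal coupling between its marginals. -/
theorem totallyCCyclMono_optimal
    (c : X1 × X2 → ℝ≥0∞) (hc : LowerSemicontinuous c)
    (a1 : X1 → ℝ≥0∞) (a2 : X2 → ℝ≥0∞) (ha1 : Measurable a1) (ha2 : Measurable a2)
    (hdom : ∀ x1 x2, c (x1, x2) ≤ a1 x1 + a2 x2)
    (F : Set (ProbabilityMeasure (X1 × X2))) (hF : F ⊆ PaPair a1 a2)
    (hmono : TotallyCCyclMono c F) :
    ∀ π ∈ F, transportCost c π = OTCost c (margFst π) (margSnd π) := by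
  intro π hπ
  have hππ : π ∈ Coupling (margFst π) (margSnd π) :=
    ⟨(π.toMeasure_map _).symm, (π.toMeasure_map _).symm⟩
  refine le_antisymm (le_iInf₂ fun γ hγ => ?_) (iInf₂_le π hππ)
  exact transportCost_le_of_fst_snd_eq c hc.measurable a1 a2 ha1 ha2 hdom hF hmono hπ
    (hγ.1.trans hππ.1.symm) (hγ.2.trans hππ.2.symm)

end OTRM
end
end

section
/- Let X be a Polish space and (Q, F_Q, 𝕄) an atomless standard Borel probability space. Then the set 𝒳^IR := { (Z,U) ∈ L⁰(Q,𝕄; X × Q) : Z and U are independent random variables and U_♯𝕄 = 𝕄 } is closed in L⁰(Q,𝕄; X × Q) with respect to the topology of convergence in probability. -/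
/-!
Convergence in probability of `(Zₙ, Uₙ)` to `(Z, U)` implies convergence in distribution, and
projecting gives `Zₙ → Z` and `Uₙ → U` in distribution. Since the laws of the `Uₙ` are all `𝕄`,
so is the law of `U`. By independence the law of `(Zₙ, Uₙ)` is the product of the laws of `Zₙ`
and `Uₙ`, and the product of probability measures is continuous for the weak topology, so the
law of `(Z, U)` is the product of the laws of `Z` and `U`.
-/

open MeasureTheory Filter Topology

namespace MeasureTheory

variable {ι E F Ω' : Type*} {Ω : ι → Type*} {m : ∀ i, MeasurableSpace (Ω i)}
  {μ : (i : ι) → Measure (Ω i)} [∀ i, IsProbabilityMeasure (μ i)]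
  {m' : MeasurableSpace Ω'} {μ' : Measure Ω'} [IsProbabilityMeasure μ'] {l : Filter ι} [l.NeBot]
  [TopologicalSpace E] [MeasurableSpace E] [BorelSpace E]

lemma TendstoInDistribution.map_eq_of_forall_map_eq [HasOuterApproxClosed E]
    {X : (i : ι) → Ω i → E} {Z : Ω' → E} (h : TendstoInDistribution X l Z μ μ')
    {ν : Measure E} (hX : ∀ i, (μ i).map (X i) = ν) :
    μ'.map Z = ν := by
  obtain ⟨i⟩ : Nonempty ι := l.nonempty_of_neBot
  have : IsProbabilityMeasure ν :=
    hX i ▸ Measure.isProbabilityMeasure_map (h.forall_aemeasurable i)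
  have hconst : Tendsto (β := ProbabilityMeasure E) (fun _ ↦ ⟨ν, this⟩) l
      (𝓝 ⟨μ'.map Z, Measure.isProbabilityMeasure_map h.aemeasurable_limit⟩) := by
    simpa only [hX] using h.tendsto
  exact congrArg Subtype.val
    (tendsto_nhds_unique (X := ProbabilityMeasure E) hconst tendsto_const_nhds)

open ProbabilityTheory TopologicalSpace in
lemma TendstoInDistribution.indepFun [TopologicalSpace F] [MeasurableSpace F] [BorelSpace F]
    [SecondCountableTopology E] [SecondCountableTopology F]
    [PseudoMetrizableSpace E] [PseudoMetrizableSpace F]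
    {X : (i : ι) → Ω i → E} {Y : (i : ι) → Ω i → F} {X' : Ω' → E} {Y' : Ω' → F}
    (h : TendstoInDistribution (fun i ω ↦ (X i ω, Y i ω)) l (fun ω ↦ (X' ω, Y' ω)) μ μ')
    (hind : ∀ i, IndepFun (X i) (Y i) (μ i)) :
    IndepFun X' Y' μ' := by
  have hX : TendstoInDistribution X l X' μ μ' := h.continuous_comp continuous_fst
  have hY : TendstoInDistribution Y l Y' μ μ' := h.continuous_comp continuous_snd
  rw [indepFun_iff_map_prod_eq_prod_map_map hX.aemeasurable_limit hY.aemeasurable_limit]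
  have hlaw : ∀ i, (μ i).map (fun ω ↦ (X i ω, Y i ω))
      = ((μ i).map (X i)).prod ((μ i).map (Y i)) :=
    fun i ↦ (indepFun_iff_map_prod_eq_prod_map_map (hX.forall_aemeasurable i)
      (hY.forall_aemeasurable i)).1 (hind i)
  have hprod := (ProbabilityMeasure.continuous_prod.tendsto _).comp
    (hX.tendsto.prodMk_nhds hY.tendsto)
  exact congrArg Subtype.val <| tendsto_nhds_unique (X := ProbabilityMeasure (E × F)) h.tendsto
    (hprod.congr fun i ↦ Subtype.ext (hlaw i).symm)

end MeasureTheory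

namespace OTRM

theorem isClosed_independentRandomization_general
    {X : Type*} [MetricSpace X] [PolishSpace X] [MeasurableSpace X] [BorelSpace X]
    {Q : Type*} [MetricSpace Q] [PolishSpace Q] [MeasurableSpace Q] [BorelSpace Q]
    (𝕄 : Measure Q) [IsProbabilityMeasure 𝕄]
    (Z : ℕ → Q → X) (U : ℕ → Q → Q)
    (hZ : ∀ n, Measurable (Z n)) (hU : ∀ n, Measurable (U n))
    (hind : ∀ n, ProbabilityTheory.IndepFun (Z n) (U n) 𝕄)
    (hlaw : ∀ n, Measure.map (U n) 𝕄 = 𝕄)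
    (Zlim : Q → X) (Ulim : Q → Q)
    (htendsto : TendstoInMeasure 𝕄 (fun n q => (Z n q, U n q)) atTop
      (fun q => (Zlim q, Ulim q))) :
    ProbabilityTheory.IndepFun Zlim Ulim 𝕄 ∧ Measure.map Ulim 𝕄 = 𝕄 := by
  have hdist := htendsto.tendstoInDistribution fun n ↦ ((hZ n).prodMk (hU n)).aemeasurable
  have hdistU : TendstoInDistribution U atTop Ulim (fun _ ↦ 𝕄) 𝕄 :=
    hdist.continuous_comp continuous_snd
  exact ⟨hdist.indepFun hind, hdistU.map_eq_of_forall_map_eq hlaw⟩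

/-- Lemma 4.4: let `X` be a Polish (metric) space and `(Q, F_Q, 𝕄)` an
atomless standard Borel probability space (here realized as a Polish metric space with its
Borel σ-algebra and an atomless Borel probability measure). The set
`𝒳^IR = {(Z,U) ∈ L⁰(Q,𝕄;X×Q) : Z ⫫ U, U_♯𝕄 = 𝕄}` is closed with respect to the topology of
convergence in probability; since that topology is metrizable, this is expressed by
sequential closedness for convergence in measure. -/
theorem isClosed_independentRandomization
    {X : Type*} [MetricSpace X] [PolishSpace X] [MeasurableSpace X] [BorelSpace X]
    {Q : Type*} [MetricSpace Q] [PolishSpace Q] [MeasurableSpace Q] [BorelSpace Q]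
    (𝕄 : Measure Q) [IsProbabilityMeasure 𝕄] [NullSingletonClass 𝕄]
    (Z : ℕ → Q → X) (U : ℕ → Q → Q)
    (hZ : ∀ n, Measurable (Z n)) (hU : ∀ n, Measurable (U n))
    (hind : ∀ n, ProbabilityTheory.IndepFun (Z n) (U n) 𝕄)
    (hlaw : ∀ n, Measure.map (U n) 𝕄 = 𝕄)
    (Zlim : Q → X) (Ulim : Q → Q) (hZlim : Measurable Zlim) (hUlim : Measurable Ulim)
    (htendsto : TendstoInMeasure 𝕄 (fun n q => (Z n q, U n q)) atTop
      (fun q => (Zlim q, Ulim q))) :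
    ProbabilityTheory.IndepFun Zlim Ulim 𝕄 ∧ Measure.map Ulim 𝕄 = 𝕄 :=
  isClosed_independentRandomization_general 𝕄 Z U hZ hU hind hlaw Zlim Ulim htendsto

end OTRM
end

section
/- Let c : X1 × X2 → [0,+∞] be continuous with c ≤ a1 ⊕ a2, and let F ⊆ P_{a1⊕a2}(X1×X2). Then F is totally C-cyclically monotone if and only if its lift F̂ := { (Z1,Z2) ∈ 𝒳_{1,a1} × 𝒳_{2,a2} : (Z1,Z2)_♯𝕄 ∈ F } is Ĉ-cyclically monotone. -/
open MeasureTheory Topology ENNReal Set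

noncomputable section

namespace OTRM

variable {X1 X2 : Type*}
  [MeasurableSpace X1] [TopologicalSpace X1] [BorelSpace X1] [PolishSpace X1]
  [MeasurableSpace X2] [TopologicalSpace X2] [BorelSpace X2] [PolishSpace X2]

section Lift

variable {Q : Type*} [MeasurableSpace Q]

/-- The law (push-forward) `ι(Z) = Z_♯𝕄` of a random variable, as a probability measure
(junk value if `Z` is not a.e. measurable). -/
def law (𝕄 : Measure Q) [IsProbabilityMeasure 𝕄] {X : Type*} [MeasurableSpace X] [Nonempty X]
    (Z : Q → X) : ProbabilityMeasure X :=
  @dite _ (AEMeasurable Z 𝕄) (Classical.propDecidable _)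
    (fun h => ⟨𝕄.map Z, Measure.isProbabilityMeasure_map h⟩)
    (fun _ => ⟨Measure.dirac (Classical.arbitrary X), by infer_instance⟩)

/-- The lifted space `𝒳_{a}`: measurable random variables with finite `a`-moment. -/
def XA (𝕄 : Measure Q) {X : Type*} [MeasurableSpace X] (a : X → ℝ≥0∞) : Set (Q → X) :=
  {Z | Measurable Z ∧ (∫⁻ q, a (Z q) ∂𝕄) ≠ ⊤}

/-- The lifted cost `Ĉ(Z1,Z2) = ∫_Q c(Z1(q),Z2(q)) d𝕄(q)`. -/
def liftCost (𝕄 : Measure Q) (c : X1 × X2 → ℝ≥0∞) (Z1 : Q → X1) (Z2 : Q → X2) : ℝ≥0∞ :=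
  ∫⁻ q, c (Z1 q, Z2 q) ∂𝕄

end Lift

variable [Nonempty X1] [Nonempty X2]

/-!
Pushing `𝕄` forward along `q ↦ (Z₁ q, …, Z_N q)` turns a finite family in `F̂` into a plan `θ`
on `(X1 × X2)^N` whose pair marginals lie in `F`, and turns sums of `Ĉ` into integrals against
`θ` of sums of `c`. Conversely every such `θ` arises in this way, because `𝕄` is atomless: carried
to `ℝ` by a Borel embedding, its probability integral transform is uniform on `[0, 1]`, and every
law on a standard Borel space is an image of the uniform law.
-/

open ProbabilityTheory

section Representation

variable (ρ : Measure ℝ) [IsProbabilityMeasure ρ] [NullSingletonClass ρ]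

theorem continuous_cdf_of_nullSingletonClass : Continuous (cdf ρ) := by
  refine continuous_iff_continuousAt.2 fun x => ?_
  rw [(monotone_cdf ρ).continuousAt_iff_leftLim_eq_rightLim, (cdf ρ).rightLim_eq]
  have h := (cdf ρ).measure_singleton x
  rw [measure_cdf, measure_singleton, eq_comm, ENNReal.ofReal_eq_zero] at h
  linarith [(monotone_cdf ρ).leftLim_le (le_refl x)]

theorem exists_cdf_eq {t : ℝ} (ht₀ : 0 < t) (ht₁ : t < 1) : ∃ y, cdf ρ y = t := by
  obtain ⟨a, ha⟩ := ((tendsto_cdf_atBot ρ).eventually_lt_const ht₀).exists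
  obtain ⟨b, hb⟩ := ((tendsto_cdf_atTop ρ).eventually_const_lt ht₁).exists
  have hab : a ≤ b := le_of_lt <| (monotone_cdf ρ).reflect_lt (ha.trans hb)
  obtain ⟨y, -, hy⟩ := intermediate_value_Icc hab
    (continuous_cdf_of_nullSingletonClass ρ).continuousOn ⟨ha.le, hb.le⟩
  exact ⟨y, hy⟩

theorem measure_setOf_cdf_le {t : ℝ} (ht₀ : 0 ≤ t) (ht₁ : t ≤ 1) :
    ρ {x | cdf ρ x ≤ t} = ENNReal.ofReal t := by
  set S := {x | cdf ρ x ≤ t}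
  rcases ht₁.eq_or_lt with rfl | ht₁
  · simp [S, cdf_le_one]
  apply le_antisymm
  · rcases S.eq_empty_or_nonempty with hS | hS
    · simp [hS]
    obtain ⟨b, hb⟩ := ((tendsto_cdf_atTop ρ).eventually_const_lt ht₁).exists
    have hS_bdd : BddAbove S :=
      ⟨b, fun y hy => le_of_lt <| (monotone_cdf ρ).reflect_lt (lt_of_le_of_lt hy hb)⟩
    have hS_closed : IsClosed S :=
      isClosed_le (continuous_cdf_of_nullSingletonClass ρ) continuous_const
    calc ρ S ≤ ρ (Iic (sSup S)) := measure_mono fun y hy => le_csSup hS_bdd hy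
      _ = ENNReal.ofReal (cdf ρ (sSup S)) := (ofReal_cdf ρ _).symm
      _ ≤ ENNReal.ofReal t := ENNReal.ofReal_le_ofReal (hS_closed.csSup_mem hS hS_bdd)
  · rcases ht₀.eq_or_lt with rfl | ht₀
    · simp
    obtain ⟨y, hy⟩ := exists_cdf_eq ρ ht₀ ht₁
    calc ENNReal.ofReal t = ρ (Iic y) := by rw [← hy, ofReal_cdf]
      _ ≤ ρ S := measure_mono fun z hz => (monotone_cdf ρ hz).trans_eq hy

/-- The probability integral transform, viewed as a map into the unit interval. -/
def cdfUnitInterval (x : ℝ) : unitInterval := ⟨cdf ρ x, cdf_nonneg ρ x, cdf_le_one ρ x⟩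

theorem map_cdfUnitInterval : ρ.map (cdfUnitInterval ρ) = volume := by
  have hmeas : Measurable (cdfUnitInterval ρ) :=
    (continuous_cdf_of_nullSingletonClass ρ).measurable.subtype_mk
  have := Measure.isProbabilityMeasure_map (μ := ρ) hmeas.aemeasurable
  refine Measure.ext_of_Iic _ _ fun t => ?_
  rw [Measure.map_apply hmeas measurableSet_Iic, unitInterval.volume_Iic]
  exact measure_setOf_cdf_le ρ t.2.1 t.2.2

end Representation

theorem exists_measurable_map_eq_of_nullSingletonClass {Q S : Type*}
    [MeasurableSpace Q] [StandardBorelSpace Q] (𝕄 : Measure Q) [IsProbabilityMeasure 𝕄]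
    [NullSingletonClass 𝕄] [MeasurableSpace S] [StandardBorelSpace S] [Nonempty S]
    (θ : Measure S) [IsProbabilityMeasure θ] : ∃ T : Q → S, Measurable T ∧ 𝕄.map T = θ := by
  obtain ⟨e, he⟩ := exists_measurableEmbedding_real Q
  have := Measure.isProbabilityMeasure_map (μ := 𝕄) he.measurable.aemeasurable
  have : NullSingletonClass (𝕄.map e) := ⟨fun x => by
    rw [Measure.map_apply he.measurable (measurableSet_singleton x)]
    exact Subsingleton.measure_zero (fun a ha b hb => he.injective (ha.trans hb.symm)) 𝕄⟩
  obtain ⟨f, hf, hfθ⟩ := Measure.exists_measurable_map_eq θ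
  have hU : Measurable (cdfUnitInterval (𝕄.map e)) :=
    (continuous_cdf_of_nullSingletonClass _).measurable.subtype_mk
  refine ⟨f ∘ cdfUnitInterval (𝕄.map e) ∘ e, hf.comp (hU.comp he.measurable), ?_⟩
  rw [← Measure.map_map hf (hU.comp he.measurable), ← Measure.map_map hU he.measurable,
    map_cdfUnitInterval, hfθ]

section Lift

variable {Q : Type*} [MeasurableSpace Q] (𝕄 : Measure Q) [IsProbabilityMeasure 𝕄]
  {α β : Type*} [MeasurableSpace α] [Nonempty α] [MeasurableSpace β] [Nonempty β]

theorem coe_law {Z : Q → α} (hZ : AEMeasurable Z 𝕄) : (law 𝕄 Z : Measure α) = 𝕄.map Z := by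
  simp [law, hZ]

theorem law_map {Z : Q → α} (hZ : Measurable Z) {f : α → β} (hf : Measurable f) :
    (law 𝕄 Z).map hf.aemeasurable = law 𝕄 (f ∘ Z) := by
  apply ProbabilityMeasure.toMeasure_injective
  rw [ProbabilityMeasure.toMeasure_map, coe_law 𝕄 hZ.aemeasurable,
    coe_law 𝕄 (hf.comp hZ).aemeasurable, Measure.map_map hf hZ]

theorem exists_law_eq [StandardBorelSpace Q] [NullSingletonClass 𝕄] [StandardBorelSpace α]
    (θ : ProbabilityMeasure α) : ∃ T : Q → α, Measurable T ∧ law 𝕄 T = θ := by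
  obtain ⟨T, hT, hTθ⟩ := exists_measurable_map_eq_of_nullSingletonClass 𝕄 (θ : Measure α)
  exact ⟨T, hT, ProbabilityMeasure.toMeasure_injective ((coe_law 𝕄 hT.aemeasurable).trans hTθ)⟩

/-- The lift `F̂` of a set of plans `F`. -/
def liftSet (F : Set (ProbabilityMeasure (α × β))) : Set ((Q → α) × (Q → β)) :=
  {p | Measurable p.1 ∧ Measurable p.2 ∧ law 𝕄 (fun q => (p.1 q, p.2 q)) ∈ F}

def splitPairs {ι : Type*} (T : Q → ι → α × β) (i : ι) : (Q → α) × (Q → β) :=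
  (fun q => (T q i).1, fun q => (T q i).2)

theorem splitPairs_mem_liftSet_iff {ι : Type*} {T : Q → ι → α × β} (hT : Measurable T)
    (F : Set (ProbabilityMeasure (α × β))) :
    (∀ i, splitPairs T i ∈ liftSet 𝕄 F) ↔
      ∀ i, (law 𝕄 T).map (measurable_pi_apply i).aemeasurable ∈ F := by
  refine forall_congr' fun i => ?_
  have hTi : Measurable fun q => T q i := (measurable_pi_apply i).comp hT
  rw [law_map 𝕄 hT (measurable_pi_apply i)]
  exact ⟨fun h => h.2.2, fun h => ⟨measurable_fst.comp hTi, measurable_snd.comp hTi, h⟩⟩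

theorem lintegral_law_sum_cost {ι : Type*} [Fintype ι] {c : α × β → ℝ≥0∞} (hc : Measurable c)
    {T : Q → ι → α × β} (hT : Measurable T) (τ : ι → ι) :
    ∫⁻ ω, ∑ i, c ((ω i).1, (ω (τ i)).2) ∂(law 𝕄 T : Measure (ι → α × β))
      = ∑ i, liftCost 𝕄 c (splitPairs T i).1 (splitPairs T (τ i)).2 := by
  rw [coe_law 𝕄 hT.aemeasurable, lintegral_map (by fun_prop) hT,
    lintegral_finsetSum _ fun i _ => by fun_prop]
  rfl

theorem lintegral_law_cyclCost_le_iff {ι : Type*} [Fintype ι] {c : α × β → ℝ≥0∞}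
    (hc : Measurable c) {T : Q → ι → α × β} (hT : Measurable T) (σ : ι → ι) :
    (∫⁻ ω, ∑ i, c (ω i) ∂(law 𝕄 T : Measure (ι → α × β))
        ≤ ∫⁻ ω, ∑ i, c ((ω i).1, (ω (σ i)).2) ∂(law 𝕄 T : Measure (ι → α × β))) ↔
      ∑ i, liftCost 𝕄 c (splitPairs T i).1 (splitPairs T i).2
        ≤ ∑ i, liftCost 𝕄 c (splitPairs T i).1 (splitPairs T (σ i)).2 := by
  rw [← lintegral_law_sum_cost 𝕄 hc hT σ]
  exact iff_of_eq (congrArg (· ≤ _) (lintegral_law_sum_cost 𝕄 hc hT id))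

end Lift

theorem totallyCCyclMono_iff_lift_cyclMono_general
    {Q : Type*} [MeasurableSpace Q] [StandardBorelSpace Q]
    (𝕄 : Measure Q) [IsProbabilityMeasure 𝕄] [NullSingletonClass 𝕄]
    (c : X1 × X2 → ℝ≥0∞) (hc : Continuous c)
    (F : Set (ProbabilityMeasure (X1 × X2))) :
    TotallyCCyclMono c F
      ↔ KCyclMono (liftCost 𝕄 c)
          {p : (Q → X1) × (Q → X2) | Measurable p.1 ∧ Measurable p.2 ∧
            law 𝕄 (fun q => (p.1 q, p.2 q)) ∈ F} := by
  constructor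
  · intro hF k hk Z hZ σ
    have hT : Measurable fun q i => ((Z i).1 q, (Z i).2 q) :=
      measurable_pi_lambda _ fun i => (hZ i).1.prodMk (hZ i).2.1
    exact (lintegral_law_cyclCost_le_iff 𝕄 hc.measurable hT σ).1
      (hF k hk _ ((splitPairs_mem_liftSet_iff 𝕄 hT F).1 hZ) σ)
  · intro hF N hN θ hθ σ
    obtain ⟨T, hT, rfl⟩ := exists_law_eq 𝕄 θ
    exact (lintegral_law_cyclCost_le_iff 𝕄 hc.measurable hT σ).2
      (hF N hN _ ((splitPairs_mem_liftSet_iff 𝕄 hT F).2 hθ) σ)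

/-- Proposition 4.9, claim 4: for continuous `c ≤ a1 ⊕ a2` and
`F ⊆ P_{a1⊕a2}(X1×X2)`, `F` is totally `C`-cyclically monotone if and only if its lift
`F̂ = {(Z1,Z2) : (Z1,Z2)_♯𝕄 ∈ F}` is `Ĉ`-cyclically monotone. -/
theorem totallyCCyclMono_iff_lift_cyclMono
    {Q : Type*} [MeasurableSpace Q] [StandardBorelSpace Q]
    (𝕄 : Measure Q) [IsProbabilityMeasure 𝕄] [NullSingletonClass 𝕄]
    (c : X1 × X2 → ℝ≥0∞) (hc : Continuous c)
    (a1 : X1 → ℝ≥0∞) (a2 : X2 → ℝ≥0∞) (ha1 : Measurable a1) (ha2 : Measurable a2)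
    (hdom : ∀ x1 x2, c (x1, x2) ≤ a1 x1 + a2 x2)
    (F : Set (ProbabilityMeasure (X1 × X2))) (hF : F ⊆ PaPair a1 a2) :
    TotallyCCyclMono c F
      ↔ KCyclMono (liftCost 𝕄 c)
          {p : (Q → X1) × (Q → X2) | Measurable p.1 ∧ Measurable p.2 ∧
            law 𝕄 (fun q => (p.1 q, p.2 q)) ∈ F} :=
  totallyCCyclMono_iff_lift_cyclMono_general 𝕄 c hc F

end OTRM
end
end
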